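/- arXiv:2206.01688 — 4 statements merged into one kernel-verified Lean document; each statement's English description precedes it below -/
import Mathlib

section
/- Let Σ be an alphabet, let z and o be distinct symbols of Σ, and let φ be a non-erasing morphism over Σ with φ(z) = z·w for some nonempty string w. If for some integers d ≥ 1 and n ≥ 1 the string z^n·o (n copies of z followed by o) is a prefix of φ^d(z), then z^n·o is already a prefix of φ(z); in particular |φ(z)| ≥ n + 1. -/
private lemma flatMap_pref {α : Type} (f : α → List α) {u v : List α}
    (h : u <+: v) : u.flatMap f <+: v.flatMap f := by
  obtain ⟨t, rfl⟩ := h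
  exact ⟨t.flatMap f, by simp [List.flatMap_append]⟩

/-- if φ is a non-erasing morphism with φ(z) = z·w (w nonempty),
    z ≠ o, and z^n·o is a prefix of φ^d(z) for some d ≥ 1, n ≥ 1, then z^n·o
    is already a prefix of φ(z); in particular |φ(z)| ≥ n + 1. -/
theorem stmt3 {α : Type} (f : α → List α) (hne : ∀ b : α, f b ≠ [])
    (z o : α) (hzo : z ≠ o) (w : List α) (hw : w ≠ []) (hfz : f z = z :: w)
    (d n : ℕ) (hd : 1 ≤ d) (hn : 1 ≤ n)
    (hpre : (List.replicate n z ++ [o]) <+: (fun l => l.flatMap f)^[d] [z]) :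
    (List.replicate n z ++ [o]) <+: f z ∧ n + 1 ≤ (f z).length := by
  set g : List α → List α := fun l => l.flatMap f with hg
  have hgz : g [z] = f z := by simp [hg]
  -- [z] is a prefix of every iterate
  have hbase : ∀ m : ℕ, [z] <+: g^[m] [z] := by
    intro m
    induction m with
    | zero => simp
    | succ k ih =>
      rw [Function.iterate_succ_apply']
      refine List.IsPrefix.trans ?_ (flatMap_pref f ih)
      exact ⟨w, by simp [hfz]⟩
  -- f z is a prefix of g^[d] [z]
  obtain ⟨m, rfl⟩ : ∃ m, d = m + 1 := ⟨d - 1, (Nat.succ_pred_eq_of_pos hd).symm⟩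
  have hfzpre : f z <+: g^[m + 1] [z] := by
    rw [Function.iterate_succ_apply', ← hgz]
    exact flatMap_pref f (hbase m)
  -- the two prefixes are comparable
  have hmain : (List.replicate n z ++ [o]) <+: f z := by
    rcases List.prefix_or_prefix_of_prefix hpre hfzpre with h | h
    · exact h
    -- f z is a prefix of replicate n z ++ [o]
    rcases Nat.lt_or_ge (f z).length (n + 1) with hlen | hlen
    · -- f z is a prefix of replicate n z, hence all entries are z
      exfalso
      have hsub : f z <+: List.replicate n z := by
        obtain ⟨t, ht⟩ := h
        have : f z = (List.replicate n z ++ [o]).take (f z).length := by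
          rw [← ht, List.take_left]
        rw [List.take_append_of_le_length (by simpa using Nat.lt_succ_iff.mp hlen)] at this
        exact this ▸ List.take_prefix _ _
      have hallz : ∀ x ∈ f z, x = z := fun x hx =>
        List.eq_of_mem_replicate (hsub.subset hx)
      -- then every iterate has only z's
      have hiter : ∀ k, ∀ x ∈ g^[k] [z], x = z := by
        intro k
        induction k with
        | zero => intro x hx; simpa using hx
        | succ j ih =>
          intro x hx
          rw [Function.iterate_succ_apply'] at hx
          simp only [hg, List.mem_flatMap] at hx
          obtain ⟨a, ha, hxa⟩ := hx
          exact hallz x ((ih a ha) ▸ hxa)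
      have ho : o ∈ g^[m + 1] [z] := hpre.subset (by simp)
      exact hzo ((hiter (m + 1) o ho).symm)
    · -- lengths force equality
      have := List.IsPrefix.eq_of_length_le h (by simpa using hlen)
      exact this ▸ List.prefix_refl _
  exact ⟨hmain, by simpa using hmain.length_le⟩
end

section
/- Let Σ be a finite alphabet with |Σ| = C, let φ be a non-erasing morphism over Σ of width at most t (t ≥ 1), let a ∈ Σ satisfy φ(a) = a·w with w nonempty, and let τ : Σ → {0,1} be a coding (applied symbol-wise to strings). If for some integers d ≥ 0 and n ≥ 1 the string 0^n·1 (n zeros followed by a one) is a prefix of τ(φ^d(a)), then t^C ≥ n + 1. -/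
namespace Stmt7Aux

variable {α : Type} (f : α → List α) (τ : α → Bool)

/-- one morphism step on strings -/
def g (f : α → List α) : List α → List α := fun l => l.flatMap f

lemma g_append (u v : List α) : g f (u ++ v) = g f u ++ g f v := by
  simp [g]

lemma iter_append (k : ℕ) (u v : List α) :
    (g f)^[k] (u ++ v) = (g f)^[k] u ++ (g f)^[k] v := by
  induction k generalizing u v with
  | zero => rfl
  | succ k ih =>
      simp only [Function.iterate_succ_apply]
      rw [g_append, ih]

lemma iter_nil (k : ℕ) : (g f)^[k] ([] : List α) = [] := by
  induction k with
  | zero => rfl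
  | succ k ih => rw [Function.iterate_succ_apply]; simpa [g] using ih

lemma iter_flatMap (k : ℕ) (l : List α) :
    (g f)^[k] l = l.flatMap (fun c => (g f)^[k] [c]) := by
  induction l with
  | nil => simp [iter_nil]
  | cons c l ih =>
      have : (c :: l) = [c] ++ l := rfl
      rw [this, iter_append, ih]
      simp

lemma len_g {t : ℕ} (hwidth : ∀ b : α, (f b).length ≤ t) (l : List α) :
    (g f l).length ≤ t * l.length := by
  induction l with
  | nil => simp [g]
  | cons c l ih =>
      have : g f (c :: l) = f c ++ g f l := by simp [g]
      rw [this, List.length_append, List.length_cons]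
      calc (f c).length + (g f l).length ≤ t + t * l.length :=
            Nat.add_le_add (hwidth c) ih
        _ = t * (l.length + 1) := by ring

lemma len_iter {t : ℕ} (hwidth : ∀ b : α, (f b).length ≤ t) (k : ℕ) (l : List α) :
    ((g f)^[k] l).length ≤ t ^ k * l.length := by
  induction k generalizing l with
  | zero => simp
  | succ k ih =>
      rw [Function.iterate_succ_apply]
      calc ((g f)^[k] (g f l)).length ≤ t ^ k * (g f l).length := ih _
        _ ≤ t ^ k * (t * l.length) := Nat.mul_le_mul_left _ (len_g f hwidth l)
        _ = t ^ (k + 1) * l.length := by ring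

/-- `Q k b` : the `k`-th iterate starting from `b` contains a `true` symbol. -/
def Q (k : ℕ) (b : α) : Prop := ∃ x ∈ (g f)^[k] [b], τ x = true

lemma Q_succ (k : ℕ) (b : α) :
    Q f τ (k + 1) b ↔ ∃ c ∈ f b, Q f τ k c := by
  unfold Q
  rw [Function.iterate_succ_apply]
  have h1 : g f [b] = f b := by simp [g]
  rw [h1, iter_flatMap]
  constructor
  · rintro ⟨x, hx, hτ⟩
    obtain ⟨c, hc, hx'⟩ := List.mem_flatMap.mp hx
    exact ⟨c, hc, x, hx', hτ⟩
  · rintro ⟨c, hc, x, hx, hτ⟩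
    exact ⟨x, List.mem_flatMap.mpr ⟨c, hc, hx⟩, hτ⟩

/-- `IsMin k` : `k` is the minimal level for some symbol. -/
def IsMin (k : ℕ) : Prop := ∃ b, Q f τ k b ∧ ∀ j < k, ¬ Q f τ j b

lemma isMin_descend {k : ℕ} (h : IsMin f τ (k + 1)) : IsMin f τ k := by
  obtain ⟨b, hQ, hmin⟩ := h
  obtain ⟨c, hc, hQc⟩ := (Q_succ f τ k b).mp hQ
  refine ⟨c, hQc, fun j hj hQj => ?_⟩
  exact hmin (j + 1) (by omega) ((Q_succ f τ j b).mpr ⟨c, hc, hQj⟩)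

lemma isMin_le {m : ℕ} (h : IsMin f τ m) : ∀ k ≤ m, IsMin f τ k := by
  induction m with
  | zero =>
      intro k hk
      obtain rfl : k = 0 := by omega
      exact h
  | succ m ih =>
      intro k hk
      rcases eq_or_lt_of_le hk with h' | h'
      · exact h' ▸ h
      · exact ih (isMin_descend f τ h) k (by omega)

lemma iter_prefix {a : α} {w : List α} (hfa : f a = a :: w) (k : ℕ) :
    (g f)^[k] [a] <+: (g f)^[k + 1] [a] := by
  rw [Function.iterate_succ_apply]
  have h1 : g f [a] = [a] ++ w := by simp [g, hfa]
  rw [h1, iter_append]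
  exact ⟨_, rfl⟩

lemma iter_prefix_le {a : α} {w : List α} (hfa : f a = a :: w) {j k : ℕ} (h : j ≤ k) :
    (g f)^[j] [a] <+: (g f)^[k] [a] := by
  induction k with
  | zero =>
      obtain rfl : j = 0 := by omega
      simp
  | succ k ih =>
      rcases Nat.le_succ_iff.mp h with h' | h'
      · exact (ih h').trans (iter_prefix f hfa k)
      · simp [h']

end Stmt7Aux

open Stmt7Aux in
/-- if |Σ| = C, φ is non-erasing of width at most t (t ≥ 1),
    φ(a) = a·w with w nonempty, τ : Σ → {0,1} is a coding, and 0^n·1 (n ≥ 1)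
    is a prefix of τ(φ^d(a)) for some d ≥ 0, then t^C ≥ n + 1.
    (Bits are modeled by `Bool`, with 0 = `false` and 1 = `true`.) -/
theorem stmt7 {α : Type} [Fintype α] (C : ℕ) (hC : Fintype.card α = C)
    (t : ℕ) (ht : 1 ≤ t) (f : α → List α) (hne : ∀ b : α, f b ≠ [])
    (hwidth : ∀ b : α, (f b).length ≤ t)
    (a : α) (w : List α) (hw : w ≠ []) (hfa : f a = a :: w)
    (τ : α → Bool) (d n : ℕ) (hn : 1 ≤ n)
    (hpre : (List.replicate n false ++ [true]) <+:
      ((fun l => l.flatMap f)^[d] [a]).map τ) :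
    n + 1 ≤ t ^ C := by
  classical
  have hg : (fun l : List α => l.flatMap f) = g f := rfl
  rw [hg] at hpre
  -- there is a true symbol in the d-th iterate
  have hQd : Q f τ d a := by
    have htrue : true ∈ ((g f)^[d] [a]).map τ := by
      obtain ⟨s, hs⟩ := hpre
      rw [← hs]
      simp
    obtain ⟨x, hx, hτ⟩ := List.mem_map.mp htrue
    exact ⟨x, hx, hτ⟩
  have hex : ∃ k, Q f τ k a := ⟨d, hQd⟩
  set d0 := Nat.find hex with hd0def
  have hQ0 : Q f τ d0 a := Nat.find_spec hex
  have hd0d : d0 ≤ d := Nat.find_min' hex hQd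
  have hmin : IsMin f τ d0 := ⟨a, hQ0, fun j hj => Nat.find_min hex hj⟩
  have hall : ∀ k ≤ d0, IsMin f τ k := isMin_le f τ hmin
  -- pigeonhole: d0 + 1 ≤ C
  have hc : ∀ k : Fin (d0 + 1), IsMin f τ (k : ℕ) := fun k => hall k (by omega)
  let F : Fin (d0 + 1) → α := fun k => (hc k).choose
  have hFQ : ∀ k : Fin (d0 + 1), Q f τ (k : ℕ) (F k) := fun k => (hc k).choose_spec.1
  have hFmin : ∀ k : Fin (d0 + 1), ∀ j < (k : ℕ), ¬ Q f τ j (F k) :=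
    fun k => (hc k).choose_spec.2
  have hne2 : ∀ k1 k2 : Fin (d0 + 1), (k1 : ℕ) < (k2 : ℕ) → F k1 ≠ F k2 := by
    intro k1 k2 hlt heq
    exact hFmin k2 k1 hlt (heq ▸ hFQ k1)
  have hinj : Function.Injective F := by
    intro k1 k2 heq
    by_contra hne'
    rcases Nat.lt_or_ge (k1 : ℕ) (k2 : ℕ) with h | h
    · exact hne2 k1 k2 h heq
    · rcases Nat.lt_or_ge (k2 : ℕ) (k1 : ℕ) with h' | h'
      · exact hne2 k2 k1 h' heq.symm
      · exact hne' (Fin.ext (by omega))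
  have hcard : d0 + 1 ≤ C := by
    have := Fintype.card_le_of_injective F hinj
    simpa [hC] using this
  -- the true symbol sits at index i in the d0-th iterate
  obtain ⟨x, hx, hτx⟩ := hQ0
  obtain ⟨i, hi, hix⟩ := List.mem_iff_getElem.mp hx
  have hpref : (g f)^[d0] [a] <+: (g f)^[d] [a] := iter_prefix_le f hfa hd0d
  have hi' : i < ((g f)^[d] [a]).length := lt_of_lt_of_le hi hpref.length_le
  have hval : ((g f)^[d] [a])[i]'hi' = x := (hpref.getElem hi).symm.trans hix
  -- the first n symbols map to false, so n ≤ i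
  have hni : n ≤ i := by
    by_contra hlt
    push_neg at hlt
    have hilen : i < (List.replicate n false ++ [true] : List Bool).length := by
      simp; omega
    have h2 := hpre.getElem hilen
    have h3 : (List.replicate n false ++ [true] : List Bool)[i]'hilen = false := by
      rw [List.getElem_append_left (by simpa using hlt)]
      simp
    have h4 : (((g f)^[d] [a]).map τ)[i]'(by simpa using hi') = true := by
      rw [List.getElem_map, hval, hτx]
    rw [h3, h4] at h2
    simp at h2
  have hlen : n + 1 ≤ ((g f)^[d0] [a]).length := by omega
  calc n + 1 ≤ ((g f)^[d0] [a]).length := hlen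
    _ ≤ t ^ d0 * 1 := by simpa using len_iter f hwidth d0 [a]
    _ = t ^ d0 := by ring
    _ ≤ t ^ C := Nat.pow_le_pow_right ht (by omega)
end

section
/- For every integer C ≥ 1 and every integer n ≥ C^C, there is no tuple (Σ, φ, τ, a, d) where Σ is a finite alphabet with |Σ| ≤ C, φ is a non-erasing morphism over Σ of width at most C, a ∈ Σ is a symbol with φ(a) = a·w for some nonempty string w, τ : Σ → {0,1} is a coding, and d ≥ 0 is an integer, such that 0^n·1 (n zeros followed by a one) is a prefix of τ(φ^d(a)). In other words, no family of prolongable coded morphisms of bounded size can generate all strings 0^n 1. -/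
/-- for C ≥ 1 and n ≥ C^C, there is no tuple (Σ, φ, τ, a, d) with
    |Σ| ≤ C, φ a non-erasing morphism over Σ of width at most C, φ(a) = a·w
    with w nonempty, τ : Σ → {0,1} a coding, and d ≥ 0, such that 0^n·1 is a
    prefix of τ(φ^d(a)).
    (Bits are modeled by `Bool`, with 0 = `false` and 1 = `true`.) -/
theorem stmt8 (C n : ℕ) (hC : 1 ≤ C) (hn : C ^ C ≤ n) :
    ¬ ∃ (α : Type) (_ : Fintype α) (f : α → List α) (a : α) (w : List α)
        (τ : α → Bool) (d : ℕ),
      Fintype.card α ≤ C ∧ (∀ b : α, f b ≠ []) ∧ (∀ b : α, (f b).length ≤ C) ∧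
      f a = a :: w ∧ w ≠ [] ∧
      (List.replicate n false ++ [true]) <+:
        ((fun l => l.flatMap f)^[d] [a]).map τ := by
  classical
  rintro ⟨α, inst, f, a, w, τ, d, hcard, hne, hwid, hfa, hw, hpre⟩
  set g : List α → List α := fun l => l.flatMap f with hg
  -- g distributes over append
  have hgapp : ∀ l1 l2 : List α, g (l1 ++ l2) = g l1 ++ g l2 := by
    intro l1 l2; simp [hg]
  have hiter_app : ∀ (j : ℕ) (l1 l2 : List α),
      g^[j] (l1 ++ l2) = g^[j] l1 ++ g^[j] l2 := by
    intro j
    induction j with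
    | zero => intro l1 l2; simp
    | succ j ih =>
      intro l1 l2
      rw [Function.iterate_succ_apply, Function.iterate_succ_apply,
        Function.iterate_succ_apply, hgapp, ih]
  have hsingle : g [a] = f a := by simp [hg]
  -- prefix structure
  have hpref : ∀ j : ℕ, g^[j] [a] <+: g^[j + 1] [a] := by
    intro j
    refine ⟨g^[j] w, ?_⟩
    rw [Function.iterate_succ_apply, hsingle, hfa]
    have h1 : (a :: w : List α) = [a] ++ w := rfl
    rw [h1, hiter_app]
  have hprefle : ∀ j k : ℕ, j ≤ k → g^[j] [a] <+: g^[k] [a] := by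
    intro j k h
    induction k, h using Nat.le_induction with
    | base => exact List.prefix_rfl
    | succ k hk ih => exact ih.trans (hpref k)
  -- length bound
  have hlen1 : ∀ l : List α, (g l).length ≤ C * l.length := by
    intro l
    induction l with
    | nil => simp [hg]
    | cons b l ih =>
      have h1 : g (b :: l) = f b ++ g l := by simp [hg]
      rw [h1, List.length_append]
      calc (f b).length + (g l).length ≤ C + C * l.length :=
            Nat.add_le_add (hwid b) ih
        _ = C * (b :: l).length := by rw [List.length_cons]; ring
  have hlen : ∀ j : ℕ, (g^[j] [a]).length ≤ C ^ j := by
    intro j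
    induction j with
    | zero => simp
    | succ j ih =>
      rw [Function.iterate_succ_apply']
      calc (g (g^[j] [a])).length ≤ C * (g^[j] [a]).length := hlen1 _
        _ ≤ C * C ^ j := Nat.mul_le_mul_left _ ih
        _ = C ^ (j + 1) := by ring
  -- reachable sets
  set step : Finset α → Finset α :=
    fun S => S ∪ S.biUnion (fun b => (f b).toFinset) with hstep
  set reach : ℕ → Finset α := fun j => step^[j] {a} with hreach
  have hreach_succ : ∀ j : ℕ, reach (j + 1) = step (reach j) := by
    intro j; simp [hreach, Function.iterate_succ_apply']
  have hmono1 : ∀ j : ℕ, reach j ⊆ reach (j + 1) := by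
    intro j
    rw [hreach_succ]
    exact Finset.subset_union_left
  have hmono : ∀ j k : ℕ, j ≤ k → reach j ⊆ reach k := by
    intro j k h
    induction k, h using Nat.le_induction with
    | base => exact Finset.Subset.refl _
    | succ k hk ih => exact ih.trans (hmono1 k)
  have hmem : ∀ j : ℕ, ∀ c ∈ g^[j] [a], c ∈ reach j := by
    intro j
    induction j with
    | zero =>
      intro c hc
      simp only [Function.iterate_zero_apply, List.mem_singleton] at hc
      simp [hreach, hc]
    | succ j ih =>
      intro c hc
      rw [Function.iterate_succ_apply'] at hc
      simp only [hg, List.mem_flatMap] at hc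
      obtain ⟨b, hb, hcb⟩ := hc
      rw [hreach_succ, hstep]
      refine Finset.mem_union_right _ ?_
      exact Finset.mem_biUnion.mpr ⟨b, ih b hb, List.mem_toFinset.mpr hcb⟩
  have hback : ∀ j : ℕ, ∀ b ∈ reach j, ∃ m ≤ j, b ∈ g^[m] [a] := by
    intro j
    induction j with
    | zero =>
      intro b hb
      simp only [hreach, Function.iterate_zero_apply, Finset.mem_singleton] at hb
      exact ⟨0, le_rfl, by simp [hb]⟩
    | succ j ih =>
      intro b hb
      rw [hreach_succ, hstep] at hb
      rcases Finset.mem_union.mp hb with hb | hb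
      · obtain ⟨m, hm, hbm⟩ := ih b hb
        exact ⟨m, Nat.le_succ_of_le hm, hbm⟩
      · obtain ⟨b', hb', hbb'⟩ := Finset.mem_biUnion.mp hb
        obtain ⟨m, hm, hbm⟩ := ih b' hb'
        refine ⟨m + 1, Nat.succ_le_succ hm, ?_⟩
        rw [Function.iterate_succ_apply']
        simp only [hg, List.mem_flatMap]
        exact ⟨b', hbm, List.mem_toFinset.mp hbb'⟩
  -- stabilization
  have hstab : ∃ j < C, reach j = reach (j + 1) := by
    by_contra hcon
    push_neg at hcon
    have hcardgrow : ∀ j : ℕ, j ≤ C → j + 1 ≤ (reach j).card := by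
      intro j
      induction j with
      | zero =>
        intro _
        have : reach 0 = {a} := by simp [hreach]
        rw [this]; simp
      | succ j ih =>
        intro hj
        have hjC : j < C := Nat.lt_of_succ_le hj
        have hssub : reach j ⊂ reach (j + 1) :=
          lt_of_le_of_ne (hmono1 j) (hcon j hjC)
        have := Finset.card_lt_card hssub
        have := ih (Nat.le_of_lt hjC)
        omega
    have h1 : C + 1 ≤ (reach C).card := hcardgrow C le_rfl
    have h2 : (reach C).card ≤ Fintype.card α := Finset.card_le_univ _
    omega
  obtain ⟨j₀, hj₀C, hj₀⟩ := hstab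
  have hstable : ∀ k : ℕ, reach (j₀ + k) = reach j₀ := by
    intro k
    induction k with
    | zero => rfl
    | succ k ih =>
      show reach (j₀ + k + 1) = reach j₀
      rw [hreach_succ, ih, ← hreach_succ, ← hj₀]
  have hall : ∀ m : ℕ, reach m ⊆ reach j₀ := by
    intro m
    rcases le_or_gt m j₀ with h | h
    · exact hmono m j₀ h
    · have : m = j₀ + (m - j₀) := by omega
      rw [this, hstable]
  -- the "has a true symbol" predicate
  set P : ℕ → Prop := fun j => ∃ c ∈ g^[j] [a], τ c = true with hP
  have hPd : P d := by
    have htrue : true ∈ (g^[d] [a]).map τ := by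
      refine hpre.sublist.mem ?_
      simp
    obtain ⟨c, hc, hct⟩ := List.mem_map.mp htrue
    exact ⟨c, hc, hct⟩
  have hEx : ∃ j, P j := ⟨d, hPd⟩
  set e₀ : ℕ := Nat.find hEx with he₀
  have hPe₀ : P e₀ := Nat.find_spec hEx
  have he₀d : e₀ ≤ d := Nat.find_min' hEx hPd
  have he₀C : e₀ < C := by
    obtain ⟨c, hc, hct⟩ := hPd
    have hc1 : c ∈ reach j₀ := hall d (hmem d c hc)
    obtain ⟨m, hm, hcm⟩ := hback j₀ c hc1
    have : e₀ ≤ m := Nat.find_min' hEx ⟨c, hcm, hct⟩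
    omega
  -- derive the contradiction
  obtain ⟨c₀, hc₀, hc₀t⟩ := hPe₀
  have hlen₀ : (g^[e₀] [a]).length ≤ n := by
    calc (g^[e₀] [a]).length ≤ C ^ e₀ := hlen e₀
      _ ≤ C ^ C := Nat.pow_le_pow_right hC (Nat.le_of_lt he₀C)
      _ ≤ n := hn
  have hP0pre : (g^[e₀] [a]).map τ <+: (g^[d] [a]).map τ :=
    (hprefle e₀ d he₀d).map τ
  have hRpre : List.replicate n false <+: (g^[d] [a]).map τ :=
    (List.prefix_append _ _).trans hpre
  have htrue0 : true ∈ (g^[e₀] [a]).map τ :=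
    List.mem_map.mpr ⟨c₀, hc₀, hc₀t⟩
  have hfin : true ∈ List.replicate n false := by
    have h : (g^[e₀] [a]).map τ <+: List.replicate n false := by
      refine List.prefix_of_prefix_length_le hP0pre hRpre ?_
      rw [List.length_map, List.length_replicate]
      exact hlen₀
    exact h.sublist.mem htrue0
  have := (List.mem_replicate.mp hfin).2
  simp at this
end

section
/- Let Σ be a finite alphabet with |Σ| = C, let φ be a non-erasing morphism over Σ of width t ≥ 2, let a ∈ Σ satisfy φ(a) = a·w with w nonempty, and let τ : Σ → {0,1} be a coding. Suppose that for some integers d ≥ 0 and n ≥ 15 the string 0^n·1 is a prefix of τ(φ^d(a)). Then max(t, C) ≥ ln(n+1) / (2·ln(ln(n+1))), where ln denotes the natural logarithm. (Hence the size of any prolongable L-system generating 0^n 1 is Ω(log n / log log n).) -/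
/-!
Since `φ(a)` starts with `a`, the words `φ^k(a)` form a prefix chain, and the set of letters
of `φ^(k+1)(a)` is determined by that of `φ^k(a)`. These sets therefore grow strictly until
they stabilise, which happens after fewer than `C` steps; so the first `1` of `τ(φ^d(a))`
already lies in `τ(φ^k(a))` for some `k < C`. That prefix has length at least `n + 1`, whence
`n + 1 ≤ t ^ k ≤ M ^ M` for `M = max t C`, and taking logarithms twice gives the bound.
-/

open Function

theorem Finset.exists_lt_card_succ_eq_of_monotone {α : Type*} [Fintype α] {s : ℕ → Finset α}
    (hs : Monotone s) (h0 : (s 0).Nonempty) : ∃ k < Fintype.card α, s (k + 1) = s k := by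
  by_contra! hne
  have hcard : ∀ k ≤ Fintype.card α, k + 1 ≤ (s k).card := by
    intro k
    induction k with
    | zero => exact fun _ => h0.card_pos
    | succ k ih =>
      intro hk
      have hlt : (s k).card < (s (k + 1)).card :=
        Finset.card_lt_card ((hs k.le_succ).ssubset_of_ne (hne k hk).symm)
      have := ih (k.le_succ.trans hk)
      omega
  have := hcard _ le_rfl
  have := (s (Fintype.card α)).card_le_univ
  omega

theorem Finset.exists_lt_card_iterate_eq {α : Type*} [Fintype α] {F : Finset α → Finset α}
    {s : Finset α} (hs : s.Nonempty) (hF : Monotone fun k => F^[k] s) (j : ℕ) :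
    ∃ k < Fintype.card α, k ≤ j ∧ F^[j] s = F^[k] s := by
  obtain ⟨k, hkC, hk⟩ := Finset.exists_lt_card_succ_eq_of_monotone hF hs
  rcases le_total j k with hjk | hkj
  · exact ⟨j, hjk.trans_lt hkC, le_rfl, rfl⟩
  · refine ⟨k, hkC, hkj, ?_⟩
    have hfix : IsFixedPt F (F^[k] s) := by rwa [IsFixedPt, ← iterate_succ_apply' F]
    rw [← Nat.sub_add_cancel hkj, iterate_add_apply, (hfix.iterate _).eq]

namespace List

variable {α : Type*} (f : α → List α)

theorem length_flatMap_le_mul {t : ℕ} (hf : ∀ b, (f b).length ≤ t) (l : List α) :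
    (l.flatMap f).length ≤ t * l.length := by
  rw [length_flatMap, mul_comm, ← smul_eq_mul, ← length_map (f := length ∘ f)]
  exact sum_le_card_nsmul _ _ fun x hx => by
    obtain ⟨b, -, rfl⟩ := mem_map.mp hx
    exact hf b

theorem length_iterate_flatMap_le {t : ℕ} (hf : ∀ b, (f b).length ≤ t) (k : ℕ) (l : List α) :
    ((fun l => l.flatMap f)^[k] l).length ≤ t ^ k * l.length := by
  induction k generalizing l with
  | zero => simp
  | succ k ih =>
    calc _ ≤ t ^ k * (l.flatMap f).length := ih _
      _ ≤ t ^ k * (t * l.length) := Nat.mul_le_mul_left _ (length_flatMap_le_mul f hf l)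
      _ = t ^ (k + 1) * l.length := by ring

theorem IsPrefix.iterate_flatMap {u v : List α} (h : u <+: v) (k : ℕ) :
    (fun l => l.flatMap f)^[k] u <+: (fun l => l.flatMap f)^[k] v := by
  induction k generalizing u v with
  | zero => exact h
  | succ k ih => exact ih (h.flatMap f)

theorem iterate_flatMap_prefix_of_le {a : α} {w : List α} (hfa : f a = a :: w) {k k' : ℕ}
    (hk : k ≤ k') : (fun l => l.flatMap f)^[k] [a] <+: (fun l => l.flatMap f)^[k'] [a] := by
  induction k' , hk using Nat.le_induction with
  | base => exact prefix_rfl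
  | succ k' _ ih =>
    refine ih.trans ?_
    rw [iterate_succ_apply]
    exact IsPrefix.iterate_flatMap f ⟨w, by simp [hfa]⟩ k'

theorem toFinset_iterate_flatMap [DecidableEq α] (k : ℕ) (l : List α) :
    ((fun l => l.flatMap f)^[k] l).toFinset =
      (fun s : Finset α => s.biUnion fun c => (f c).toFinset)^[k] l.toFinset :=
  Semiconj.iterate_right (fun l => by ext; simp) k l

theorem exists_lt_card_mem_iterate_flatMap [Fintype α] {a : α} {w : List α}
    (hfa : f a = a :: w) {b : α} {d : ℕ} (hb : b ∈ (fun l => l.flatMap f)^[d] [a]) :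
    ∃ k < Fintype.card α, k ≤ d ∧ b ∈ (fun l => l.flatMap f)^[k] [a] := by
  classical
  have hmono : Monotone fun k => ((fun l => l.flatMap f)^[k] [a]).toFinset :=
    fun _ _ hk _ => by simpa using fun hx => (iterate_flatMap_prefix_of_le f hfa hk).subset hx
  simp only [toFinset_iterate_flatMap] at hmono
  obtain ⟨k, hkC, hkd, hdk⟩ := Finset.exists_lt_card_iterate_eq (by simp) hmono d
  refine ⟨k, hkC, hkd, ?_⟩
  rw [← mem_toFinset, toFinset_iterate_flatMap, ← hdk, ← toFinset_iterate_flatMap]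
  simpa using hb

theorem le_length_of_mem_of_prefix_replicate_append {u v : List Bool} {n : ℕ} (hu : u <+: v)
    (hv : replicate n false ++ [true] <+: v) (htrue : true ∈ u) : n + 1 ≤ u.length := by
  by_contra! hlen
  have hu' : u <+: replicate n false ++ [true] := prefix_of_prefix_length_le hu hv (by simp; omega)
  have hu'' : u <+: replicate n false :=
    prefix_of_prefix_length_le hu' (prefix_append _ _) (by simp; omega)
  simpa using eq_of_mem_replicate (hu''.subset htrue)

end List

namespace Real

theorem le_two_mul_mul_log_of_le_mul_log {L M : ℝ} (hL : 1 ≤ log L) (hM : 0 < M)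
    (h : L ≤ M * log M) : L ≤ 2 * M * log L := by
  rcases le_total L M with hLM | hML
  · nlinarith
  · have := log_le_log hM hML
    nlinarith

theorem log_div_two_mul_log_log_le {x : ℝ} {M : ℕ} (hx : 16 ≤ x) (h : x ≤ M ^ M) :
    log x / (2 * log (log x)) ≤ M := by
  have hlog16 : exp 1 < log 16 := by
    have h16 : log 16 = 4 * log 2 := by
      rw [show (16 : ℝ) = 2 ^ 4 by norm_num, log_pow, Nat.cast_ofNat]
    linarith [log_two_gt_d9, exp_one_lt_d9]
  have hL : exp 1 < log x := hlog16.trans_le (log_le_log (by norm_num) hx)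
  have hLL : 1 < log (log x) := (lt_log_iff_exp_lt ((exp_pos 1).trans hL)).mpr hL
  have hM : 0 < M := Nat.pos_of_ne_zero fun hM => by simp [hM] at h; linarith
  rw [div_le_iff₀ (by linarith), mul_left_comm, ← mul_assoc]
  refine le_two_mul_mul_log_of_le_mul_log hLL.le (by exact_mod_cast hM) ?_
  calc log x ≤ log ((M : ℝ) ^ M) := log_le_log (by linarith) h
    _ = M * log M := log_pow _ _

end Real

theorem stmt9_general {α : Type} [Fintype α] (C : ℕ) (hC : Fintype.card α = C)
    (t : ℕ) (f : α → List α)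
    (hwidth : Finset.univ.sup (fun b : α => (f b).length) = t)
    (a : α) (w : List α) (hfa : f a = a :: w)
    (τ : α → Bool) (d n : ℕ) (hn : 15 ≤ n)
    (hpre : (List.replicate n false ++ [true]) <+:
      ((fun l => l.flatMap f)^[d] [a]).map τ) :
    Real.log (n + 1) / (2 * Real.log (Real.log (n + 1))) ≤ max (t : ℝ) (C : ℝ) := by
  have hwidth' (b : α) : (f b).length ≤ t :=
    hwidth ▸ Finset.le_sup (f := fun b => (f b).length) (Finset.mem_univ b)
  obtain ⟨b, hbd, hbτ⟩ := List.mem_map.mp (hpre.subset (by simp) : true ∈ _)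
  obtain ⟨k, hkC, hkd, hbk⟩ := List.exists_lt_card_mem_iterate_flatMap f hfa hbd
  have hlen := List.le_length_of_mem_of_prefix_replicate_append
    ((List.iterate_flatMap_prefix_of_le f hfa hkd).map τ) hpre (hbτ ▸ List.mem_map_of_mem hbk)
  have hpow : n + 1 ≤ max t C ^ max t C :=
    calc n + 1 ≤ t ^ k := by
          rw [List.length_map] at hlen
          simpa using hlen.trans (List.length_iterate_flatMap_le f hwidth' k [a])
      _ ≤ max t C ^ k := Nat.pow_le_pow_left (le_max_left _ _) _
      _ ≤ max t C ^ max t C := Nat.pow_le_pow_right (by omega) (by omega)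
  rw [← Nat.cast_max]
  exact Real.log_div_two_mul_log_log_le (by norm_cast; omega) (by exact_mod_cast hpow)

/-- if |Σ| = C, φ is non-erasing of width t ≥ 2, φ(a) = a·w with
    w nonempty, τ : Σ → {0,1} is a coding, and 0^n·1 (n ≥ 15) is a prefix of
    τ(φ^d(a)) for some d ≥ 0, then max(t, C) ≥ ln(n+1) / (2·ln(ln(n+1))).
    (Bits are modeled by `Bool`, with 0 = `false` and 1 = `true`.) -/
theorem stmt9 {α : Type} [Fintype α] (C : ℕ) (hC : Fintype.card α = C)
    (t : ℕ) (ht : 2 ≤ t) (f : α → List α) (hne : ∀ b : α, f b ≠ [])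
    (hwidth : Finset.univ.sup (fun b : α => (f b).length) = t)
    (a : α) (w : List α) (hw : w ≠ []) (hfa : f a = a :: w)
    (τ : α → Bool) (d n : ℕ) (hn : 15 ≤ n)
    (hpre : (List.replicate n false ++ [true]) <+:
      ((fun l => l.flatMap f)^[d] [a]).map τ) :
    Real.log (n + 1) / (2 * Real.log (Real.log (n + 1))) ≤ max (t : ℝ) (C : ℝ) :=
  stmt9_general C hC t f hwidth a w hfa τ d n hn hpre
end
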